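/- For every integer n ≥ 1, the 2π-periodic extension of βₙ^{(o)} is continuously differentiable on all of ℝ, and it is infinitely differentiable on each open interval ((k−1)π/n, kπ/n); thus the weight function of the good modular flow generator Lₙ^{(o)} is globally C¹ and piecewise C^∞, even though each individual coolness summand β^{[(k−1)π/n, kπ/n]} fails to be differentiable at its endpoints. -/

import Mathlib

open Real

/-- Coolness function on the circle:
`β^{[p,q]}(θ) = 2 sin((θ-p)/2) sin((q-θ)/2) / sin((q-p)/2)` on `[p,q]`, `0` outside. -/
noncomputable def betaCirc (p q θ : ℝ) : ℝ :=
  if θ ∈ Set.Icc p q then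
    2 * Real.sin ((θ - p) / 2) * Real.sin ((q - θ) / 2) / Real.sin ((q - p) / 2)
  else 0

/-- The `2π`-periodic extension `β̃^{[p,q]}(θ) = Σ_{j∈ℤ} β^{[p,q]}(θ + 2πj)`. -/
noncomputable def betaTilde (p q θ : ℝ) : ℝ :=
  ∑' j : ℤ, betaCirc p q (θ + 2 * π * j)

/-- The normalization constant `Aₙ`: `A₁ = 1/(2π)` and `Aₙ = tan(π/(2n))(n²-1)/8` for `n ≥ 2`. -/
noncomputable def Acoef (n : ℕ) : ℝ :=
  if n = 1 then 1 / (2 * π) else Real.tan (π / (2 * n)) * ((n : ℝ) ^ 2 - 1) / 8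

/-- The weight function `βₙ^{(o)}(θ) = Aₙ Σ_{k=1}^{2n} (-1)^{k-1} β^{[(k-1)π/n, kπ/n]}(θ)`,
extended `2π`-periodically to all of `ℝ`. -/
noncomputable def betaO (n : ℕ) (θ : ℝ) : ℝ :=
  Acoef n * ∑ k ∈ Finset.Icc 1 (2 * n),
    (-1 : ℝ) ^ (k - 1) * betaTilde (((k : ℝ) - 1) * π / n) ((k : ℝ) * π / n) θ

namespace Stmt12

open Set

lemma betaCirc_zero_of_le {p q x : ℝ} (h : q ≤ x) : betaCirc p q x = 0 := by
  unfold betaCirc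
  split_ifs with h'
  · have : x = q := le_antisymm h'.2 h
    subst this
    simp
  · rfl

lemma betaCirc_zero_of_ge {p q x : ℝ} (h : x ≤ p) : betaCirc p q x = 0 := by
  unfold betaCirc
  split_ifs with h'
  · have : x = p := le_antisymm h h'.1
    subst this
    simp
  · rfl

lemma betaTilde_periodic (p q : ℝ) : Function.Periodic (betaTilde p q) (2 * π) := by
  intro θ
  unfold betaTilde
  rw [← (Equiv.addRight (1 : ℤ)).tsum_eq (fun j : ℤ => betaCirc p q (θ + 2 * π * j))]
  apply tsum_congr
  intro j
  simp only [Equiv.coe_addRight]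
  push_cast
  ring_nf

lemma betaO_periodic (n : ℕ) : Function.Periodic (betaO n) (2 * π) := by
  intro θ
  unfold betaO
  congr 1
  apply Finset.sum_congr rfl
  intro k _
  rw [betaTilde_periodic]

variable {n : ℕ}

lemma npos (hn : 1 ≤ n) : (0:ℝ) < n := by positivity

lemma angle_pos (hn : 1 ≤ n) : 0 < π / (2 * n) := by
  have := Real.pi_pos
  positivity

lemma angle_le (hn : 1 ≤ n) : π / (2 * n) ≤ π / 2 := by
  have h2 : (2:ℝ) ≤ 2 * n := by
    have : (1:ℝ) ≤ n := by exact_mod_cast hn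
    nlinarith
  exact div_le_div_of_nonneg_left Real.pi_pos.le (by norm_num) h2 |>.trans_eq rfl

lemma spos (hn : 1 ≤ n) : 0 < Real.sin (π / (2 * n)) := by
  apply Real.sin_pos_of_pos_of_lt_pi (angle_pos hn)
  calc π / (2 * n) ≤ π / 2 := angle_le hn
    _ < π := by linarith [Real.pi_pos]

/-- collapse of the tsum for θ ∈ [0, 2π] and arcs inside [0,2π] -/
lemma betaTilde_eq_betaCirc {p q θ : ℝ} (hp : 0 ≤ p) (hq : q ≤ 2 * π)
    (hθ : θ ∈ Icc 0 (2 * π)) : betaTilde p q θ = betaCirc p q θ := by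
  unfold betaTilde
  have h0 : betaCirc p q (θ + 2 * π * (0:ℤ)) = betaCirc p q θ := by norm_num
  rw [tsum_eq_single (0 : ℤ) ?_, h0]
  intro j hj
  rcases lt_or_gt_of_ne hj with hj1 | hj1
  · apply betaCirc_zero_of_ge
    have hj2 : j ≤ -1 := by omega
    have : (j:ℝ) ≤ -1 := by exact_mod_cast hj2
    nlinarith [hθ.2, Real.pi_pos]
  · apply betaCirc_zero_of_le
    have : (1:ℝ) ≤ (j:ℝ) := by exact_mod_cast hj1
    nlinarith [hθ.1, Real.pi_pos]

noncomputable def Pfun (n : ℕ) (k : ℤ) (θ : ℝ) : ℝ :=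
  (Real.cos (θ - (2 * (k:ℝ) - 1) * π / (2 * n)) - Real.cos (π / (2 * n))) /
    Real.sin (π / (2 * n))

lemma prod_to_sum (hn : 1 ≤ n) (k : ℤ) (θ : ℝ) :
    2 * Real.sin ((θ - ((k:ℝ) - 1) * π / n) / 2) * Real.sin (((k:ℝ) * π / n - θ) / 2) /
      Real.sin (π / (2 * n)) = Pfun n k θ := by
  have hN : ((n:ℝ)) ≠ 0 := (npos hn).ne'
  unfold Pfun
  rw [Real.cos_sub_cos]
  have e1 : (θ - (2 * (k:ℝ) - 1) * π / (2 * n) + π / (2 * n)) / 2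
      = (θ - ((k:ℝ) - 1) * π / n) / 2 := by field_simp; ring
  have e2 : (θ - (2 * (k:ℝ) - 1) * π / (2 * n) - π / (2 * n)) / 2
      = -(((k:ℝ) * π / n - θ) / 2) := by field_simp; ring
  rw [e1, e2, Real.sin_neg]
  ring

lemma betaO_eq_nat (hn : 1 ≤ n) {k : ℕ} (hk1 : 1 ≤ k) (hk2 : k ≤ 2 * n) {θ : ℝ}
    (hθ : θ ∈ Icc (((k:ℝ) - 1) * π / n) ((k:ℝ) * π / n)) :
    betaO n θ = Acoef n * ((-1 : ℝ) ^ ((k:ℤ) - 1) * Pfun n k θ) := by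
  have hN : (0:ℝ) < n := npos hn
  have hπ := Real.pi_pos
  have hk1' : (1:ℝ) ≤ (k:ℝ) := by exact_mod_cast hk1
  have hk2' : (k:ℝ) ≤ 2 * n := by exact_mod_cast hk2
  have hθ' : θ ∈ Icc 0 (2 * π) := by
    constructor
    · refine le_trans ?_ hθ.1
      have h1 : (0:ℝ) ≤ (k:ℝ) - 1 := by linarith
      positivity
    · refine hθ.2.trans ?_
      rw [div_le_iff₀ hN]
      nlinarith
  have hsum : ∀ m ∈ Finset.Icc 1 (2 * n),
      (-1:ℝ) ^ (m - 1) * betaTilde (((m:ℝ) - 1) * π / n) ((m:ℝ) * π / n) θ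
      = (-1:ℝ) ^ (m - 1) * betaCirc (((m:ℝ) - 1) * π / n) ((m:ℝ) * π / n) θ := by
    intro m hm
    have hm := Finset.mem_Icc.mp hm
    have hm1 : (1:ℝ) ≤ (m:ℝ) := by exact_mod_cast hm.1
    have hm2 : (m:ℝ) ≤ 2 * n := by exact_mod_cast hm.2
    rw [betaTilde_eq_betaCirc ?_ ?_ hθ']
    · have h1 : (0:ℝ) ≤ (m:ℝ) - 1 := by linarith
      positivity
    · rw [div_le_iff₀ hN]
      nlinarith
  unfold betaO
  rw [Finset.sum_congr rfl hsum]
  rw [Finset.sum_eq_single_of_mem k (Finset.mem_Icc.mpr ⟨hk1, hk2⟩) (fun m hm hmk => ?_)]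
  rotate_left
  · rcases lt_or_gt_of_ne hmk with h | h
    · have hmr : (m:ℝ) ≤ (k:ℝ) - 1 := by
        have h1 : m + 1 ≤ k := h
        have h2 : ((m:ℝ)) + 1 ≤ k := by exact_mod_cast h1
        linarith
      have hle : (m:ℝ) * π / n ≤ θ := by
        refine le_trans ?_ hθ.1
        apply div_le_div_of_nonneg_right ?_ hN.le
        nlinarith
      rw [betaCirc_zero_of_le hle, mul_zero]
    · have hmr : (k:ℝ) ≤ (m:ℝ) - 1 := by
        have h1 : k + 1 ≤ m := h
        have h2 : ((k:ℝ)) + 1 ≤ m := by exact_mod_cast h1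
        linarith
      have hge : θ ≤ ((m:ℝ) - 1) * π / n := by
        refine hθ.2.trans ?_
        apply div_le_div_of_nonneg_right ?_ hN.le
        nlinarith
      rw [betaCirc_zero_of_ge hge, mul_zero]
  congr 1
  congr 1
  · rw [show ((k:ℤ) - 1) = ((k - 1 : ℕ) : ℤ) by omega, zpow_natCast]
  · unfold betaCirc
    rw [if_pos hθ]
    have e3 : ((k:ℝ) * π / n - ((k:ℝ) - 1) * π / n) / 2 = π / (2 * n) := by
      field_simp; ring
    rw [e3]
    exact prod_to_sum hn k θ

lemma neg_one_zpow_helper (a b : ℤ) : (-1:ℝ) ^ (a + 2 * b) = (-1:ℝ) ^ a := by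
  rw [zpow_add₀ (by norm_num : (-1:ℝ) ≠ 0), zpow_mul]
  norm_num

lemma betaO_eq (hn : 1 ≤ n) (k : ℤ) {θ : ℝ}
    (hθ : θ ∈ Icc (((k:ℝ) - 1) * π / n) ((k:ℝ) * π / n)) :
    betaO n θ = Acoef n * ((-1 : ℝ) ^ (k - 1) * Pfun n k θ) := by
  have hN : (0:ℝ) < n := npos hn
  have h2n : (0:ℤ) < 2 * n := by
    have : (1:ℤ) ≤ n := by exact_mod_cast hn
    omega
  have hmod0 : 0 ≤ (k - 1) % (2 * n) := Int.emod_nonneg _ (by omega)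
  have hmod1 : (k - 1) % (2 * n) < 2 * n := Int.emod_lt_of_pos _ h2n
  have hdm : 2 * (n:ℤ) * ((k - 1) / (2 * n)) + (k - 1) % (2 * n) = k - 1 :=
    Int.mul_ediv_add_emod _ _
  set j : ℤ := (k - 1) / (2 * n) with hj
  set r : ℤ := (k - 1) % (2 * n) + 1 with hr
  have hkey : k = 2 * n * j + r := by rw [hr]; linarith [hdm]
  have hr1 : 1 ≤ r := by omega
  have hr2 : r ≤ 2 * n := by omega
  set rn : ℕ := r.toNat with hrn
  have hrz : (rn : ℤ) = r := Int.toNat_of_nonneg (by omega)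
  have hc : (k:ℝ) = 2 * n * j + r := by exact_mod_cast hkey
  set θ' : ℝ := θ - 2 * π * j with hθ'def
  have hp : ((k:ℝ) - 1) * π / n - 2 * π * j = ((r:ℝ) - 1) * π / n := by
    rw [hc]; field_simp; ring
  have hq : (k:ℝ) * π / n - 2 * π * j = (r:ℝ) * π / n := by
    rw [hc]; field_simp; ring
  have hθ2 : θ' ∈ Icc (((rn:ℝ) - 1) * π / n) ((rn:ℝ) * π / n) := by
    have hrr : ((rn:ℝ)) = (r:ℝ) := by exact_mod_cast hrz
    rw [hrr]
    constructor
    · rw [← hp]; exact sub_le_sub_right hθ.1 _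
    · rw [← hq]; exact sub_le_sub_right hθ.2 _
  have hper : betaO n θ = betaO n θ' := by
    rw [hθ'def, show 2 * π * (j:ℝ) = j • (2 * π) by rw [zsmul_eq_mul]; ring]
    exact ((betaO_periodic n).sub_zsmul_eq j).symm
  rw [hper, betaO_eq_nat hn (by omega) (by omega) hθ2]
  congr 1
  congr 1
  · rw [hrz, show k - 1 = (r - 1) + 2 * (n * j) by linarith [hkey]]
    rw [neg_one_zpow_helper]
  · unfold Pfun
    congr 2
    rw [hθ'def, hrz, hc]
    field_simp
    ring

noncomputable def phi (n : ℕ) (k : ℤ) (θ : ℝ) : ℝ :=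
  Acoef n * ((-1 : ℝ) ^ (k - 1) * Pfun n k θ)

noncomputable def Dfun (n : ℕ) (k : ℤ) (θ : ℝ) : ℝ :=
  Acoef n * ((-1 : ℝ) ^ (k - 1) *
    (-Real.sin (θ - (2 * (k:ℝ) - 1) * π / (2 * n)) * 1 / Real.sin (π / (2 * n))))

lemma phi_contDiff (k : ℤ) : ContDiff ℝ (⊤ : ℕ∞) (phi n k) := by
  unfold phi Pfun
  have h1 : ContDiff ℝ (⊤ : ℕ∞) fun θ : ℝ => Real.cos (θ - (2 * (k:ℝ) - 1) * π / (2 * n)) :=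
    Real.contDiff_cos.comp (contDiff_id.sub contDiff_const)
  exact contDiff_const.mul (contDiff_const.mul ((h1.sub contDiff_const).div_const _))

lemma Dfun_continuous (k : ℤ) : Continuous (Dfun n k) := by
  unfold Dfun
  have h1 : Continuous fun θ : ℝ => Real.sin (θ - (2 * (k:ℝ) - 1) * π / (2 * n)) :=
    Real.continuous_sin.comp (continuous_id.sub continuous_const)
  exact (continuous_const.mul (continuous_const.mul
    (((h1.neg.mul continuous_const).div_const _))))

lemma phi_hasDerivAt (k : ℤ) (θ : ℝ) : HasDerivAt (phi n k) (Dfun n k θ) θ := by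
  have h1 : HasDerivAt (fun θ : ℝ => θ - (2 * (k:ℝ) - 1) * π / (2 * n)) 1 θ := by
    simpa using (hasDerivAt_id θ).sub_const ((2 * (k:ℝ) - 1) * π / (2 * n))
  have h2 := (Real.hasDerivAt_cos (θ - (2 * (k:ℝ) - 1) * π / (2 * n))).comp θ h1
  have h3 := ((h2.sub_const (Real.cos (π / (2 * n)))).div_const
    (Real.sin (π / (2 * n)))).const_mul ((-1 : ℝ) ^ (k - 1))
  have h4 := h3.const_mul (Acoef n)
  exact h4

/-- matching of one-sided derivatives at the arc boundary `kπ/n`. -/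
lemma Dfun_boundary (hn : 1 ≤ n) (k : ℤ) :
    Dfun n k ((k:ℝ) * π / n) = Dfun n (k + 1) ((k:ℝ) * π / n) := by
  have hN : ((n:ℝ)) ≠ 0 := (npos hn).ne'
  have hs : Real.sin (π / (2 * n)) ≠ 0 := (spos hn).ne'
  unfold Dfun
  push_cast
  rw [show (k:ℝ) * π / n - (2 * (k:ℝ) - 1) * π / (2 * n) = π / (2 * n) by field_simp; ring]
  rw [show (k:ℝ) * π / n - (2 * ((k:ℝ) + 1) - 1) * π / (2 * n) = -(π / (2 * n)) by
    field_simp; ring]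
  rw [Real.sin_neg, show k + 1 - 1 = (k - 1) + 1 by ring,
    zpow_add₀ (by norm_num : (-1:ℝ) ≠ 0)]
  field_simp

lemma arc_lt (hn : 1 ≤ n) (k : ℤ) : ((k:ℝ) - 1) * π / n < (k:ℝ) * π / n := by
  have hN : (0:ℝ) < n := npos hn
  have hπ := Real.pi_pos
  rw [div_lt_div_iff₀ hN hN]
  nlinarith

lemma hasDerivAt_betaO_Ico (hn : 1 ≤ n) (k : ℤ) {θ : ℝ}
    (hθ : θ ∈ Ico (((k:ℝ) - 1) * π / n) ((k:ℝ) * π / n)) :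
    HasDerivAt (betaO n) (Dfun n k θ) θ := by
  have hN : (0:ℝ) < n := npos hn
  have hkm : (((k - 1 : ℤ)):ℝ) = (k:ℝ) - 1 := by push_cast; ring
  rcases eq_or_lt_of_le hθ.1 with heq | hlt
  · -- θ is the left endpoint of arc k
    have hright : HasDerivWithinAt (betaO n) (Dfun n k θ) (Ici θ) θ := by
      refine ((phi_hasDerivAt k θ).hasDerivWithinAt).congr_of_eventuallyEq ?_ ?_
      · filter_upwards [Icc_mem_nhdsGE_of_mem (show θ ∈ Ico θ ((k:ℝ) * π / n) from
          ⟨le_refl _, hθ.2⟩)] with x hx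
        exact betaO_eq hn k ⟨heq ▸ hx.1, hx.2⟩
      · exact betaO_eq hn k ⟨heq.le, hθ.2.le⟩
    have hq : (((k - 1 : ℤ)):ℝ) * π / n = θ := by rw [hkm]; exact heq
    have hp : ((((k - 1 : ℤ)):ℝ) - 1) * π / n < θ := by
      have h := arc_lt hn (k - 1)
      rwa [hq] at h
    have hleft : HasDerivWithinAt (betaO n) (Dfun n k θ) (Iic θ) θ := by
      have hDeq : Dfun n (k - 1) θ = Dfun n k θ := by
        have h := Dfun_boundary hn (k - 1)
        rw [show (k - 1 + 1 : ℤ) = k by ring, hkm, heq] at h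
        exact h
      rw [← hDeq]
      refine ((phi_hasDerivAt (k - 1) θ).hasDerivWithinAt).congr_of_eventuallyEq ?_ ?_
      · filter_upwards [Icc_mem_nhdsLE hp] with x hx
        exact betaO_eq hn (k - 1) ⟨hx.1, hx.2.trans hq.ge⟩
      · exact betaO_eq hn (k - 1) ⟨hp.le, hq.ge⟩
    have h := hleft.union hright
    rwa [Iic_union_Ici, hasDerivWithinAt_univ] at h
  · -- interior
    refine (phi_hasDerivAt k θ).congr_of_eventuallyEq ?_
    filter_upwards [Icc_mem_nhds hlt hθ.2] with x hx
    exact betaO_eq hn k hx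

lemma hasDerivAt_betaO_Icc (hn : 1 ≤ n) (k : ℤ) {θ : ℝ}
    (hθ : θ ∈ Icc (((k:ℝ) - 1) * π / n) ((k:ℝ) * π / n)) :
    HasDerivAt (betaO n) (Dfun n k θ) θ := by
  rcases lt_or_eq_of_le hθ.2 with hlt | heq
  · exact hasDerivAt_betaO_Ico hn k ⟨hθ.1, hlt⟩
  · have hkp : (((k + 1 : ℤ)):ℝ) = (k:ℝ) + 1 := by push_cast; ring
    have hq1 : ((((k + 1 : ℤ)):ℝ) - 1) * π / n = θ := by
      rw [hkp, heq]; ring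
    have hq2 : θ < (((k + 1 : ℤ)):ℝ) * π / n := by
      have h := arc_lt hn (k + 1)
      rwa [hq1] at h
    have h := hasDerivAt_betaO_Ico hn (k + 1) ⟨hq1.le, hq2⟩
    have hDeq : Dfun n k θ = Dfun n (k + 1) θ := by
      have h2 := Dfun_boundary hn k
      rw [← heq] at h2
      exact h2
    rwa [hDeq]

lemma exists_arc (hn : 1 ≤ n) (x : ℝ) :
    ∃ k : ℤ, x ∈ Ico (((k:ℝ) - 1) * π / n) ((k:ℝ) * π / n) := by
  have hN : (0:ℝ) < n := npos hn
  have ha : (0:ℝ) < π / n := div_pos Real.pi_pos hN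
  refine ⟨⌊x / (π / n)⌋ + 1, ?_, ?_⟩
  · have h1 : (⌊x / (π / n)⌋ : ℝ) ≤ x / (π / n) := Int.floor_le _
    have h2 : (⌊x / (π / n)⌋ : ℝ) * (π / n) ≤ x := by
      rw [← le_div_iff₀ ha]; exact h1
    push_cast
    calc ((⌊x / (π / n)⌋ : ℝ) + 1 - 1) * π / n = (⌊x / (π / n)⌋ : ℝ) * (π / n) := by ring
      _ ≤ x := h2
  · have h1 : x / (π / n) < (⌊x / (π / n)⌋ : ℝ) + 1 := Int.lt_floor_add_one _
    have h2 : x < ((⌊x / (π / n)⌋ : ℝ) + 1) * (π / n) := by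
      rw [← div_lt_iff₀ ha]; exact h1
    push_cast
    calc x < ((⌊x / (π / n)⌋ : ℝ) + 1) * (π / n) := h2
      _ = ((⌊x / (π / n)⌋ : ℝ) + 1) * π / n := by ring

lemma deriv_betaO_eq (hn : 1 ≤ n) (k : ℤ) {θ : ℝ}
    (hθ : θ ∈ Icc (((k:ℝ) - 1) * π / n) ((k:ℝ) * π / n)) :
    deriv (betaO n) θ = Dfun n k θ :=
  (hasDerivAt_betaO_Icc hn k hθ).deriv

lemma contDiff_one_betaO (hn : 1 ≤ n) : ContDiff ℝ 1 (betaO n) := by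
  rw [contDiff_one_iff_deriv]
  constructor
  · intro x
    obtain ⟨k, hk⟩ := exists_arc hn x
    exact (hasDerivAt_betaO_Ico hn k hk).differentiableAt
  · rw [continuous_iff_continuousAt]
    intro x
    obtain ⟨k, hk⟩ := exists_arc hn x
    rcases eq_or_lt_of_le hk.1 with heq | hlt
    · -- boundary point
      have hkm : (((k - 1 : ℤ)):ℝ) = (k:ℝ) - 1 := by push_cast; ring
      have hq : (((k - 1 : ℤ)):ℝ) * π / n = x := by rw [hkm]; exact heq
      have hp : ((((k - 1 : ℤ)):ℝ) - 1) * π / n < x := by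
        have h := arc_lt hn (k - 1)
        rwa [hq] at h
      have hvalr : deriv (betaO n) x = Dfun n k x :=
        deriv_betaO_eq hn k ⟨heq.le, hk.2.le⟩
      have hright : ContinuousWithinAt (deriv (betaO n)) (Ici x) x := by
        refine ((Dfun_continuous k).continuousAt).continuousWithinAt.congr_of_eventuallyEq
          ?_ hvalr
        filter_upwards [Icc_mem_nhdsGE_of_mem (show x ∈ Ico x ((k:ℝ) * π / n) from
          ⟨le_refl _, hk.2⟩)] with y hy
        exact deriv_betaO_eq hn k ⟨heq ▸ hy.1, hy.2⟩
      have hleft : ContinuousWithinAt (deriv (betaO n)) (Iic x) x := by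
        have hDeq : Dfun n (k - 1) x = Dfun n k x := by
          have h := Dfun_boundary hn (k - 1)
          rw [show (k - 1 + 1 : ℤ) = k by ring, hkm, heq] at h
          exact h
        refine ((Dfun_continuous (k - 1)).continuousAt).continuousWithinAt.congr_of_eventuallyEq
          ?_ (hvalr.trans hDeq.symm)
        filter_upwards [Icc_mem_nhdsLE hp] with y hy
        exact deriv_betaO_eq hn (k - 1) ⟨hy.1, hy.2.trans hq.ge⟩
      have h := hleft.union hright
      rwa [Iic_union_Ici, continuousWithinAt_univ] at h
    · -- interior point
      refine ContinuousAt.congr (((Dfun_continuous (n := n) k)).continuousAt) ?_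
      filter_upwards [Icc_mem_nhds hlt hk.2] with y hy
      exact (deriv_betaO_eq hn k hy).symm

lemma contDiffOn_betaO (hn : 1 ≤ n) (k : ℤ) :
    ContDiffOn ℝ (⊤ : ℕ∞) (betaO n) (Ioo (((k:ℝ) - 1) * π / n) ((k:ℝ) * π / n)) :=
  ((phi_contDiff k).contDiffOn).congr
    (fun _ hx => betaO_eq hn k (Ioo_subset_Icc_self hx))

/-- the smooth extension of the coolness formula -/
noncomputable def gfun (p q : ℝ) (θ : ℝ) : ℝ :=
  2 * Real.sin ((θ - p) / 2) * Real.sin ((q - θ) / 2) / Real.sin ((q - p) / 2)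

lemma gfun_hasDerivAt_left (p q : ℝ) :
    HasDerivAt (gfun p q) (Real.sin ((q - p) / 2) / Real.sin ((q - p) / 2)) p := by
  have h1 : HasDerivAt (fun θ : ℝ => (θ - p) / 2) (1 / 2) p := by
    simpa using ((hasDerivAt_id p).sub_const p).div_const 2
  have hsin1 := (Real.hasDerivAt_sin ((p - p) / 2)).comp p h1
  have h2 : HasDerivAt (fun θ : ℝ => (q - θ) / 2) (-1 / 2) p := by
    simpa using ((hasDerivAt_id p).const_sub q).div_const 2
  have hsin2 := (Real.hasDerivAt_sin ((q - p) / 2)).comp p h2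
  have h3 := ((hsin1.const_mul 2).mul hsin2).div_const (Real.sin ((q - p) / 2))
  exact h3.congr_deriv (by simp)

lemma gfun_hasDerivAt_right (p q : ℝ) :
    HasDerivAt (gfun p q) (-(Real.sin ((q - p) / 2) / Real.sin ((q - p) / 2))) q := by
  have h1 : HasDerivAt (fun θ : ℝ => (θ - p) / 2) (1 / 2) q := by
    simpa using ((hasDerivAt_id q).sub_const p).div_const 2
  have hsin1 := (Real.hasDerivAt_sin ((q - p) / 2)).comp q h1
  have h2 : HasDerivAt (fun θ : ℝ => (q - θ) / 2) (-1 / 2) q := by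
    simpa using ((hasDerivAt_id q).const_sub q).div_const 2
  have hsin2 := (Real.hasDerivAt_sin ((q - q) / 2)).comp q h2
  have h3 := ((hsin1.const_mul 2).mul hsin2).div_const (Real.sin ((q - p) / 2))
  exact h3.congr_deriv (by simp; ring)

lemma not_differentiableAt_left {p q : ℝ} (hpq : p < q)
    (hs : 0 < Real.sin ((q - p) / 2)) : ¬ DifferentiableAt ℝ (betaCirc p q) p := by
  intro hd
  have hdd := hd.hasDerivAt
  set d := deriv (betaCirc p q) p with hdef
  have hzero : HasDerivWithinAt (betaCirc p q) 0 (Iic p) p := by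
    refine ((hasDerivAt_const p (0:ℝ)).hasDerivWithinAt).congr_of_eventuallyEq ?_ ?_
    · filter_upwards [self_mem_nhdsWithin] with x hx
      exact betaCirc_zero_of_ge hx
    · exact betaCirc_zero_of_ge (le_refl p)
  have hone : HasDerivWithinAt (betaCirc p q) 1 (Ici p) p := by
    have hval : betaCirc p q p = gfun p q p := by
      unfold betaCirc gfun
      rw [if_pos ⟨le_refl p, hpq.le⟩]
    have h := (gfun_hasDerivAt_left p q).hasDerivWithinAt (s := Ici p)
    rw [div_self hs.ne'] at h
    refine h.congr_of_eventuallyEq ?_ hval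
    filter_upwards [Icc_mem_nhdsGE_of_mem (show p ∈ Ico p q from ⟨le_refl p, hpq⟩)] with x hx
    unfold betaCirc gfun
    rw [if_pos hx]
  have h0 : d = 0 :=
    (uniqueDiffOn_Iic p p Set.self_mem_Iic).eq_deriv _ hdd.hasDerivWithinAt hzero
  have h1 : d = 1 :=
    (uniqueDiffOn_Ici p p Set.self_mem_Ici).eq_deriv _ hdd.hasDerivWithinAt hone
  rw [h0] at h1
  norm_num at h1

lemma not_differentiableAt_right {p q : ℝ} (hpq : p < q)
    (hs : 0 < Real.sin ((q - p) / 2)) : ¬ DifferentiableAt ℝ (betaCirc p q) q := by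
  intro hd
  have hdd := hd.hasDerivAt
  set d := deriv (betaCirc p q) q with hdef
  have hzero : HasDerivWithinAt (betaCirc p q) 0 (Ici q) q := by
    refine ((hasDerivAt_const q (0:ℝ)).hasDerivWithinAt).congr_of_eventuallyEq ?_ ?_
    · filter_upwards [self_mem_nhdsWithin] with x hx
      exact betaCirc_zero_of_le hx
    · exact betaCirc_zero_of_le (le_refl q)
  have hone : HasDerivWithinAt (betaCirc p q) (-1) (Iic q) q := by
    have hval : betaCirc p q q = gfun p q q := by
      unfold betaCirc gfun
      rw [if_pos ⟨hpq.le, le_refl q⟩]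
    have h := (gfun_hasDerivAt_right p q).hasDerivWithinAt (s := Iic q)
    rw [div_self hs.ne'] at h
    refine h.congr_of_eventuallyEq ?_ hval
    filter_upwards [Icc_mem_nhdsLE hpq] with x hx
    unfold betaCirc gfun
    rw [if_pos hx]
  have h0 : d = 0 :=
    (uniqueDiffOn_Ici q q Set.self_mem_Ici).eq_deriv _ hdd.hasDerivWithinAt hzero
  have h1 : d = -1 :=
    (uniqueDiffOn_Iic q q Set.self_mem_Iic).eq_deriv _ hdd.hasDerivWithinAt hone
  rw [h0] at h1
  norm_num at h1

end Stmt12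

/-- Regularity of the good-flow weight function: the `2π`-periodic extension of `βₙ^{(o)}` is
globally `C¹`, is `C^∞` on each open interval `((k-1)π/n, kπ/n)`, yet each individual coolness
summand `β^{[(k-1)π/n, kπ/n]}` fails to be differentiable at the two endpoints of its arc. -/
theorem stmt_12 (n : ℕ) (hn : 1 ≤ n) :
    ContDiff ℝ 1 (betaO n) ∧
    (∀ k : ℤ, ContDiffOn ℝ (⊤ : ℕ∞) (betaO n)
      (Set.Ioo (((k : ℝ) - 1) * π / n) ((k : ℝ) * π / n))) ∧
    (∀ k : ℕ, 1 ≤ k → k ≤ 2 * n →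
      ¬ DifferentiableAt ℝ (betaCirc (((k : ℝ) - 1) * π / n) ((k : ℝ) * π / n))
          (((k : ℝ) - 1) * π / n) ∧
      ¬ DifferentiableAt ℝ (betaCirc (((k : ℝ) - 1) * π / n) ((k : ℝ) * π / n))
          ((k : ℝ) * π / n)) := by
  refine ⟨Stmt12.contDiff_one_betaO hn, fun k => Stmt12.contDiffOn_betaO hn k, ?_⟩
  intro k hk1 hk2
  have hpq : ((k:ℝ) - 1) * π / n < (k:ℝ) * π / n := by
    have h := Stmt12.arc_lt hn (k : ℤ)
    push_cast at h
    exact h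
  have he : ((k:ℝ) * π / n - ((k:ℝ) - 1) * π / n) / 2 = π / (2 * n) := by
    have hN : ((n:ℝ)) ≠ 0 := (Stmt12.npos hn).ne'
    field_simp
    ring
  have hs : 0 < Real.sin (((k:ℝ) * π / n - ((k:ℝ) - 1) * π / n) / 2) := by
    rw [he]
    exact Stmt12.spos hn
  exact ⟨Stmt12.not_differentiableAt_left hpq hs, Stmt12.not_differentiableAt_right hpq hs⟩
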